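/- arXiv:2305.04376 — 4 statements merged into one kernel-verified Lean document; each statement's English description precedes it below -/
import Mathlib

section
/- For any K ≥ 2 binary strings s_1, …, s_K ∈ {0,1}^ℓ, there exist two distinct indices i ≠ j such that the Hamming distance between s_i and s_j is at most (1/2 + 1/(2(K−1)))·ℓ. -/
open scoped Classical

open Finset in
theorem stmt_0 (K ℓ : ℕ) (hK : 2 ≤ K) (s : Fin K → Fin ℓ → Bool) :
    ∃ i j : Fin K, i ≠ j ∧
      (hammingDist (s i) (s j) : ℝ) ≤ (1/2 + 1/(2*((K : ℝ) - 1))) * ℓ := by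
  by_contra hcon
  push_neg at hcon
  have hK2 : (2:ℝ) ≤ (K:ℝ) := by exact_mod_cast hK
  have hKne : (K:ℝ) - 1 ≠ 0 := by linarith
  set B : ℝ := (1/2 + 1/(2*((K : ℝ) - 1))) * ℓ with hB
  have hdist : ∀ i j : Fin K, (hammingDist (s i) (s j) : ℝ)
      = ∑ c : Fin ℓ, (if s i c ≠ s j c then (1:ℝ) else 0) := by
    intro i j
    rw [hammingDist, Finset.card_filter]
    push_cast
    simp
  set T : ℝ := ∑ i : Fin K, ∑ j : Fin K, (hammingDist (s i) (s j) : ℝ) with hT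
  have hTle : T ≤ ℓ * (K:ℝ)^2 / 2 := by
    have hrw : T = ∑ c : Fin ℓ, ∑ i : Fin K, ∑ j : Fin K,
        (if s i c ≠ s j c then (1:ℝ) else 0) := by
      rw [hT]
      simp_rw [hdist]
      calc ∑ i : Fin K, ∑ j : Fin K, ∑ c : Fin ℓ, (if s i c ≠ s j c then (1:ℝ) else 0)
          = ∑ i : Fin K, ∑ c : Fin ℓ, ∑ j : Fin K, (if s i c ≠ s j c then (1:ℝ) else 0) :=
            Finset.sum_congr rfl fun i _ => Finset.sum_comm
        _ = ∑ c : Fin ℓ, ∑ i : Fin K, ∑ j : Fin K, (if s i c ≠ s j c then (1:ℝ) else 0) :=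
            Finset.sum_comm
    rw [hrw]
    have hc : ∀ c : Fin ℓ, ∑ i : Fin K, ∑ j : Fin K,
        (if s i c ≠ s j c then (1:ℝ) else 0) ≤ (K:ℝ)^2/2 := by
      intro c
      set n : ℝ := (((univ : Finset (Fin K)).filter fun i => s i c = true).card : ℝ) with hn
      have hsplit : (((univ : Finset (Fin K)).filter fun i => ¬ (s i c = true)).card : ℝ)
          = (K:ℝ) - n := by
        have h := Finset.card_filter_add_card_filter_not
          (s := (univ : Finset (Fin K))) (p := fun i => s i c = true)
        rw [Finset.card_univ, Fintype.card_fin] at h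
        have : ((((univ : Finset (Fin K)).filter fun i => s i c = true).card : ℝ)
            + (((univ : Finset (Fin K)).filter fun i => ¬ (s i c = true)).card : ℝ)) = (K:ℝ) := by
          exact_mod_cast congrArg (Nat.cast : ℕ → ℝ) h
        linarith
      have hrow : ∀ i : Fin K, ∑ j : Fin K, (if s i c ≠ s j c then (1:ℝ) else 0)
          = if s i c = true then (K:ℝ) - n else n := by
        intro i
        cases hb : s i c with
        | true =>
            rw [if_pos rfl]
            rw [← hsplit, ← Finset.sum_boole]
            refine Finset.sum_congr rfl fun j _ => ?_
            by_cases hj : s j c = true <;> simp [hj]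
        | false =>
            rw [if_neg (by simp)]
            rw [hn, ← Finset.sum_boole]
            refine Finset.sum_congr rfl fun j _ => ?_
            by_cases hj : s j c = true <;> simp [hj]
      simp_rw [hrow]
      rw [Finset.sum_ite, Finset.sum_const, Finset.sum_const, nsmul_eq_mul, nsmul_eq_mul,
        ← hn]
      rw [hsplit]
      have hn0 : 0 ≤ n := by rw [hn]; positivity
      have hnK : n ≤ (K:ℝ) := by
        rw [hn]
        have : (((univ : Finset (Fin K)).filter fun i => s i c = true).card) ≤ K := by
          calc _ ≤ (univ : Finset (Fin K)).card := Finset.card_filter_le _ _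
          _ = K := by rw [Finset.card_univ, Fintype.card_fin]
        exact_mod_cast this
      nlinarith [sq_nonneg ((K:ℝ) - 2*n)]
    calc ∑ c : Fin ℓ, ∑ i : Fin K, ∑ j : Fin K, (if s i c ≠ s j c then (1:ℝ) else 0)
        ≤ ∑ _c : Fin ℓ, (K:ℝ)^2/2 := Finset.sum_le_sum fun c _ => hc c
      _ = ℓ * (K:ℝ)^2 / 2 := by
          rw [Finset.sum_const, Finset.card_univ, Fintype.card_fin, nsmul_eq_mul]; ring
  have hoff : ∑ p ∈ (univ : Finset (Fin K)).offDiag,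
      (hammingDist (s p.1) (s p.2) : ℝ) ≤ T := by
    rw [hT, ← Finset.sum_product']
    refine Finset.sum_le_sum_of_subset_of_nonneg ?_ ?_
    · intro p hp
      simp [Finset.mem_offDiag] at hp
      simp [Finset.mem_product]
    · intro p _ _
      positivity
  have hne : ((univ : Finset (Fin K)).offDiag).Nonempty := by
    refine ⟨((⟨0, by omega⟩ : Fin K), (⟨1, by omega⟩ : Fin K)), Finset.mem_offDiag.mpr
      ⟨Finset.mem_univ _, Finset.mem_univ _, ?_⟩⟩
    intro h
    have := congrArg Fin.val h
    simp at this
  have hlt : ∑ _p ∈ (univ : Finset (Fin K)).offDiag, B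
      < ∑ p ∈ (univ : Finset (Fin K)).offDiag, (hammingDist (s p.1) (s p.2) : ℝ) := by
    refine Finset.sum_lt_sum_of_nonempty hne fun p hp => ?_
    exact hcon p.1 p.2 (Finset.mem_offDiag.mp hp).2.2
  have hcard : (((univ : Finset (Fin K)).offDiag.card : ℝ)) = (K:ℝ)*K - K := by
    rw [Finset.offDiag_card, Finset.card_univ, Fintype.card_fin]
    have hle : K ≤ K * K := Nat.le_mul_of_pos_left K (by omega)
    push_cast [Nat.cast_sub hle]
    ring
  rw [Finset.sum_const, nsmul_eq_mul, hcard] at hlt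
  have heq : ((K:ℝ)*K - K) * B = ℓ * (K:ℝ)^2 / 2 := by
    rw [hB]
    field_simp
    ring
  linarith
end

section
/- Ramsey bound: for any m, n ∈ ℕ, every simple graph on at least C(m+n−2, n−1) vertices contains either a clique of size m or an independent set of size n. -/
open scoped Classical

theorem ramsey_aux_stmt6 (k : ℕ) : ∀ (m n : ℕ), m + n = k →
    ∀ (V : Type) [DecidableEq V] (G : SimpleGraph V) (s : Finset V),
    Nat.choose (m + n - 2) (n - 1) ≤ s.card →
    (∃ t ⊆ s, t.card = m ∧ ∀ i ∈ t, ∀ j ∈ t, i ≠ j → G.Adj i j) ∨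
    (∃ t ⊆ s, t.card = n ∧ ∀ i ∈ t, ∀ j ∈ t, ¬ G.Adj i j) := by
  induction k with
  | zero =>
    intro m n hk V _ G s hs
    left
    refine ⟨∅, Finset.empty_subset s, ?_, by simp⟩
    rw [Finset.card_empty]; omega
  | succ k ih =>
    intro m n hk V _ G s hs
    classical
    rcases m with _ | m
    · exact Or.inl ⟨∅, Finset.empty_subset s, rfl, by simp⟩
    rcases n with _ | n
    · exact Or.inr ⟨∅, Finset.empty_subset s, rfl, by simp⟩
    rcases m with _ | m
    · -- m = 1 : a single vertex is a clique
      have h1 : 1 ≤ s.card := le_trans (Nat.choose_pos (by omega)) hs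
      obtain ⟨v, hv⟩ := Finset.card_pos.mp h1
      exact Or.inl ⟨{v}, Finset.singleton_subset_iff.mpr hv, rfl,
        by intro i hi j hj hij; simp only [Finset.mem_singleton] at hi hj
           exact absurd (hi.trans hj.symm) hij⟩
    rcases n with _ | n
    · -- n = 1 : a single vertex is an independent set
      have h1 : 1 ≤ s.card := le_trans (Nat.choose_pos (by omega)) hs
      obtain ⟨v, hv⟩ := Finset.card_pos.mp h1
      refine Or.inr ⟨{v}, Finset.singleton_subset_iff.mpr hv, rfl, ?_⟩
      intro i hi j hj
      simp only [Finset.mem_singleton] at hi hj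
      subst hi; subst hj
      exact G.irrefl
    · -- main case : m+2, n+2
      have hs' : Nat.choose (m+n+1) n + Nat.choose (m+n+1) (n+1) ≤ s.card := by
        have hp : Nat.choose (m+n+2) (n+1) =
            Nat.choose (m+n+1) n + Nat.choose (m+n+1) (n+1) :=
          Nat.choose_succ_succ (m+n+1) n
        have : (m+2) + (n+2) - 2 = m+n+2 := by omega
        rw [this] at hs
        have : (n+2) - 1 = n+1 := by omega
        rw [this] at hs
        omega
      have hpos : 0 < s.card := by
        have h1 : 0 < Nat.choose (m+n+1) n := Nat.choose_pos (by omega)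
        omega
      obtain ⟨v, hv⟩ := Finset.card_pos.mp hpos
      set A := (s.erase v).filter (fun x => G.Adj v x) with hA
      set B := (s.erase v).filter (fun x => ¬ G.Adj v x) with hB
      have hcard : A.card + B.card = s.card - 1 := by
        have := Finset.card_filter_add_card_filter_not
          (s := s.erase v) (p := fun x => G.Adj v x)
        rw [Finset.card_erase_of_mem hv] at this
        exact this
      have hAs : A ⊆ s := (Finset.filter_subset _ _).trans (Finset.erase_subset _ _)
      have hBs : B ⊆ s := (Finset.filter_subset _ _).trans (Finset.erase_subset _ _)
      have hsplit : Nat.choose (m+n+1) (n+1) ≤ A.card ∨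
          Nat.choose (m+n+1) n ≤ B.card := by omega
      rcases hsplit with hAc | hBc
      · -- recurse with (m+1, n+2) on A
        have := ih (m+1) (n+2) (by omega) V G A
          (by have : (m+1) + (n+2) - 2 = m+n+1 := by omega
              rw [this]; simpa using hAc)
        rcases this with ⟨t, hts, htc, hadj⟩ | ⟨t, hts, htc, hnadj⟩
        · -- extend clique by v
          have hvt : v ∉ t := fun hvt =>
            (Finset.ne_of_mem_erase (Finset.mem_of_mem_filter v (hts hvt))) rfl
          refine Or.inl ⟨insert v t, ?_, ?_, ?_⟩
          · exact Finset.insert_subset hv (hts.trans hAs)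
          · rw [Finset.card_insert_of_notMem hvt, htc]
          · intro i hi j hj hij
            rw [Finset.mem_insert] at hi hj
            rcases hi with rfl | hi <;> rcases hj with rfl | hj
            · exact absurd rfl hij
            · exact (Finset.mem_filter.mp (hts hj)).2
            · exact ((Finset.mem_filter.mp (hts hi)).2).symm
            · exact hadj i hi j hj hij
        · exact Or.inr ⟨t, hts.trans hAs, htc, hnadj⟩
      · -- recurse with (m+2, n+1) on B
        have := ih (m+2) (n+1) (by omega) V G B
          (by have : (m+2) + (n+1) - 2 = m+n+1 := by omega
              rw [this]; simpa using hBc)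
        rcases this with ⟨t, hts, htc, hadj⟩ | ⟨t, hts, htc, hnadj⟩
        · exact Or.inl ⟨t, hts.trans hBs, htc, hadj⟩
        · -- extend independent set by v
          have hvt : v ∉ t := fun hvt =>
            (Finset.ne_of_mem_erase (Finset.mem_of_mem_filter v (hts hvt))) rfl
          refine Or.inr ⟨insert v t, ?_, ?_, ?_⟩
          · exact Finset.insert_subset hv (hts.trans hBs)
          · rw [Finset.card_insert_of_notMem hvt, htc]
          · intro i hi j hj
            rw [Finset.mem_insert] at hi hj
            rcases hi with rfl | hi <;> rcases hj with rfl | hj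
            · exact G.irrefl
            · exact (Finset.mem_filter.mp (hts hj)).2
            · exact fun hadj' => (Finset.mem_filter.mp (hts hi)).2 hadj'.symm
            · exact hnadj i hi j hj

theorem stmt_6 (m n N : ℕ) (G : SimpleGraph (Fin N))
    (h : Nat.choose (m + n - 2) (n - 1) ≤ N) :
    (∃ t : Finset (Fin N), t.card = m ∧ ∀ i ∈ t, ∀ j ∈ t, i ≠ j → G.Adj i j) ∨
    (∃ t : Finset (Fin N), t.card = n ∧ ∀ i ∈ t, ∀ j ∈ t, ¬ G.Adj i j) := by
  have := ramsey_aux_stmt6 (m + n) m n rfl (Fin N) G Finset.univ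
    (by simpa using h)
  rcases this with ⟨t, _, htc, hadj⟩ | ⟨t, _, htc, hnadj⟩
  · exact Or.inl ⟨t, htc, hadj⟩
  · exact Or.inr ⟨t, htc, hnadj⟩
end

section
/- Let a₁, b₁, a₂, b₂ be nonnegative reals with a₁ + b₁ = 21/47 and a₁ + b₁ + a₂ + b₂ = 1. Define δ₁ = a₁/3 + a₂/3, δ₂ = a₁/4 + b₁/2 + a₂/3, and δ₃ = max(a₂/2 + b₂/2, a₁/2 + b₁/2 + b₂/2). Then min(δ₁, δ₂, δ₃) ≤ 13/47. -/
theorem stmt_8 (a₁ b₁ a₂ b₂ : ℝ)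
    (ha₁ : 0 ≤ a₁) (hb₁ : 0 ≤ b₁) (ha₂ : 0 ≤ a₂) (hb₂ : 0 ≤ b₂)
    (h1 : a₁ + b₁ = 21/47) (h2 : a₁ + b₁ + a₂ + b₂ = 1) :
    min (a₁/3 + a₂/3)
      (min (a₁/4 + b₁/2 + a₂/3)
        (max (a₂/2 + b₂/2) (a₁/2 + b₁/2 + b₂/2))) ≤ 13/47 := by
  by_contra h
  push_neg at h
  rw [lt_min_iff, lt_min_iff, lt_max_iff] at h
  obtain ⟨hA, hB, hC⟩ := h
  rcases hC with hC | hC <;> linarith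
end

section
/- For any three binary strings a₁, a₂, a₃ ∈ {0,1}^A, there exist i ≠ j ∈ {1,2,3} and a string m ∈ {0,1}^A such that both Δ(m, a_i) ≤ A/3 + 1 and Δ(m, a_j) ≤ A/3 + 1. -/
/-!
At every coordinate three bits disagree in at most two of the three pairs, so the three pairwise
Hamming distances of `a₀, a₁, a₂` sum to at most `2A` and some pair is at distance `d ≤ 2A/3`.
A string that agrees with that pair wherever they agree and follows each of them on about half of
the coordinates where they differ is within `⌈d/2⌉ ≤ A/3 + 1` of both.
-/

open Finset

theorem exists_two_mul_hammingDist_le {ι β : Type*} [Fintype ι] [DecidableEq ι] [DecidableEq β]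
    (x y : ι → β) :
    ∃ m : ι → β, 2 * hammingDist m x ≤ hammingDist x y + 1 ∧
      2 * hammingDist m y ≤ hammingDist x y + 1 := by
  set D : Finset ι := {i | x i ≠ y i} with hD
  have hxy : hammingDist x y = #D := rfl
  obtain ⟨S, hSD, hS⟩ := exists_subset_card_eq (Nat.div_le_self #D 2)
  have hSx : ∀ i ∈ S, x i ≠ y i := fun i hi => (mem_filter.mp (hSD hi)).2
  refine ⟨fun i => if i ∈ S then y i else x i, ?_, ?_⟩
  · have hmx : hammingDist (fun i => if i ∈ S then y i else x i) x = #S := by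
      unfold hammingDist
      congr 1
      ext i
      by_cases hi : i ∈ S
      · simpa [hi] using (hSx i hi).symm
      · simp [hi]
    omega
  · have hmy : hammingDist (fun i => if i ∈ S then y i else x i) y = #(D \ S) := by
      unfold hammingDist
      congr 1
      ext i
      by_cases hi : i ∈ S <;> simp [hi, hD]
    rw [card_sdiff_of_subset hSD] at hmy
    omega

theorem hammingDist_add_hammingDist_add_hammingDist_le {ι : Type*} [Fintype ι]
    (x y z : ι → Bool) :
    hammingDist x y + hammingDist y z + hammingDist z x ≤ 2 * Fintype.card ι := by
  simp only [hammingDist, card_filter]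
  rw [← sum_add_distrib, ← sum_add_distrib, Fintype.card, card_eq_sum_ones, mul_sum]
  exact sum_le_sum fun i _ => by cases x i <;> cases y i <;> cases z i <;> decide

theorem exists_hammingDist_le_of_three_mul_hammingDist_le {ι β : Type*} [Fintype ι]
    [DecidableEq ι] [DecidableEq β] (x y : ι → β) (h : 3 * hammingDist x y ≤ 2 * Fintype.card ι) :
    ∃ m : ι → β, (hammingDist m x : ℝ) ≤ (Fintype.card ι : ℝ) / 3 + 1 ∧
      (hammingDist m y : ℝ) ≤ (Fintype.card ι : ℝ) / 3 + 1 := by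
  obtain ⟨m, hx, hy⟩ := exists_two_mul_hammingDist_le x y
  have key : ∀ n, 2 * n ≤ hammingDist x y + 1 → (n : ℝ) ≤ (Fintype.card ι : ℝ) / 3 + 1 := by
    intro n hn
    have : 6 * n ≤ 2 * Fintype.card ι + 3 := by omega
    have : (6 * n : ℝ) ≤ 2 * Fintype.card ι + 3 := by exact_mod_cast this
    linarith
  exact ⟨m, key _ hx, key _ hy⟩

open scoped Classical

theorem stmt_14 (A : ℕ) (a : Fin 3 → Fin A → Bool) :
    ∃ i j : Fin 3, i ≠ j ∧
      ∃ m : Fin A → Bool,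
        (hammingDist m (a i) : ℝ) ≤ (A : ℝ) / 3 + 1 ∧
        (hammingDist m (a j) : ℝ) ≤ (A : ℝ) / 3 + 1 := by
  have hsum := hammingDist_add_hammingDist_add_hammingDist_le (a 0) (a 1) (a 2)
  rw [Fintype.card_fin] at hsum
  have close : ∀ i j : Fin 3, i ≠ j → 3 * hammingDist (a i) (a j) ≤ 2 * A →
      ∃ i j : Fin 3, i ≠ j ∧ ∃ m : Fin A → Bool,
        (hammingDist m (a i) : ℝ) ≤ (A : ℝ) / 3 + 1 ∧
        (hammingDist m (a j) : ℝ) ≤ (A : ℝ) / 3 + 1 := fun i j hij h => by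
    obtain ⟨m, hi, hj⟩ :=
      exists_hammingDist_le_of_three_mul_hammingDist_le (a i) (a j) (by simpa using h)
    exact ⟨i, j, hij, m, by simpa using hi, by simpa using hj⟩
  by_cases h01 : 3 * hammingDist (a 0) (a 1) ≤ 2 * A
  · exact close 0 1 (by decide) h01
  by_cases h12 : 3 * hammingDist (a 1) (a 2) ≤ 2 * A
  · exact close 1 2 (by decide) h12
  exact close 2 0 (by decide) (by omega)
end
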